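/- Let A ∈ ℝ^{m×n}, let k be an integer with 1 ≤ k ≤ rank(A), and let λ_1 ≥ … ≥ λ_m ≥ 0 be the eigenvalues of A A^T in non-increasing order. Then ∑_{S ⊆ {1,…,m}, |S|=k} det(A_S A_S^T) · ‖A − π_S(A)‖_2 ≤ √((k+1)(n−k)·λ_{k+1}) · ∑_{S ⊆ {1,…,m}, |S|=k} det(A_S A_S^T). -/

import Mathlib

/-!
Write `G_S = A_S A_Sᵀ`. By Cauchy–Schwarz and `‖M‖₂ ≤ ‖M‖_F`, the square of the left-hand side
is at most `(∑_S det G_S) · ∑_S det G_S ‖A − π_S(A)‖_F²`. Since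
`det G_{S ∪ {i}} = det G_S · dist(a_i, span A_S)²`, the last sum counts every `(k+1)`-set `T`
once per element, so it equals `(k+1) ∑_T det G_T`. The sums `∑_{|S|=j} det G_S` are the sums of
the principal `j`-minors of `A Aᵀ`, i.e. the elementary symmetric functions `e_j(λ)`, and
`e_{k+1}(λ) ≤ (r − k) λ_{k+1} e_k(λ)`, where `r ≤ rank A ≤ n` is the number of nonzero `λ_i`:
every `(k+1)`-set contains an index `i > k`, and `λ_i ≤ λ_{k+1}`.
-/

open Matrix BigOperators

noncomputable def projSpan {m n : ℕ} (A : Matrix (Fin m) (Fin n) ℝ) (S : Finset (Fin m)) :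
    Matrix (Fin m) (Fin n) ℝ := fun i j =>
  (Submodule.orthogonalProjectionOnto
      (Submodule.span ℝ (Set.range (fun s : S => (WithLp.equiv 2 (Fin n → ℝ)).symm (A s))))
      ((WithLp.equiv 2 (Fin n → ℝ)).symm (A i)) : EuclideanSpace ℝ (Fin n)) j

def rowSub {m n : ℕ} (A : Matrix (Fin m) (Fin n) ℝ) (S : Finset (Fin m)) :
    Matrix {x // x ∈ S} (Fin n) ℝ := fun i j => A i.1 j

noncomputable def gramDet {m n : ℕ} (A : Matrix (Fin m) (Fin n) ℝ) (S : Finset (Fin m)) : ℝ :=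
  (rowSub A S * (rowSub A S)ᵀ).det

noncomputable def frobSq {m n : ℕ} (M : Matrix (Fin m) (Fin n) ℝ) : ℝ :=
  ∑ i, ∑ j, (M i j)^2

noncomputable def specNorm {m n : ℕ} (M : Matrix (Fin m) (Fin n) ℝ) : ℝ :=
  ‖LinearMap.toContinuousLinearMap (Matrix.toEuclideanLin M)‖

open Finset Submodule
open scoped InnerProductSpace

theorem Finset.sum_powersetCard_sum_sdiff_insert {α M : Type*} [DecidableEq α] [AddCommMonoid M]
    (s : Finset α) (k : ℕ) (g : Finset α → α → M) :
    ∑ S ∈ powersetCard k s, ∑ i ∈ s \ S, g (insert i S) i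
      = ∑ T ∈ powersetCard (k + 1) s, ∑ i ∈ T, g T i := by
  rw [sum_sigma', sum_sigma']
  refine sum_nbij' (fun x => ⟨insert x.2 x.1, x.2⟩) (fun x => ⟨x.1.erase x.2, x.2⟩)
    ?_ ?_ ?_ ?_ fun _ _ => rfl
  · rintro ⟨S, i⟩ hx
    simp only [mem_sigma, mem_powersetCard, mem_sdiff] at hx ⊢
    exact ⟨⟨insert_subset hx.2.1 hx.1.1, by rw [card_insert_of_notMem hx.2.2, hx.1.2]⟩,
      mem_insert_self _ _⟩
  · rintro ⟨T, i⟩ hx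
    simp only [mem_sigma, mem_powersetCard, mem_sdiff] at hx ⊢
    exact ⟨⟨(erase_subset _ _).trans hx.1.1, by rw [card_erase_of_mem hx.2, hx.1.2]; rfl⟩,
      hx.1.1 hx.2, notMem_erase _ _⟩
  · rintro ⟨S, i⟩ hx
    simp only [mem_sigma, mem_sdiff] at hx
    simp [erase_insert hx.2.2]
  · rintro ⟨T, i⟩ hx
    simp only [mem_sigma] at hx
    simp [insert_erase hx.2]

theorem Finset.sum_powersetCard_sum_sdiff_insert_eq_mul {α M : Type*} [DecidableEq α]
    [NonAssocSemiring M] (s : Finset α) (k : ℕ) (f : Finset α → M) :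
    ∑ S ∈ powersetCard k s, ∑ i ∈ s \ S, f (insert i S)
      = (k + 1) * ∑ T ∈ powersetCard (k + 1) s, f T := by
  rw [sum_powersetCard_sum_sdiff_insert s k fun T _ => f T, mul_sum]
  refine sum_congr rfl fun T hT => ?_
  rw [sum_const, (mem_powersetCard.mp hT).2, nsmul_eq_mul]
  push_cast; rfl

namespace Antitone

variable {m : ℕ} {lam : Fin m → ℝ}

theorem card_filter_Ici_ne_zero_le (hmono : Antitone lam) (hnn : ∀ i, 0 ≤ lam i) (a : Fin m) :
    #{i ∈ Ici a | lam i ≠ 0} ≤ #{i | lam i ≠ 0} - a := by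
  rcases eq_empty_or_nonempty {i ∈ Ici a | lam i ≠ 0} with h | ⟨j, hj⟩
  · simp [h]
  rw [mem_filter, mem_Ici] at hj
  have hIio : Iio a ⊆ ({i | lam i ≠ 0} : Finset (Fin m)) := fun i hi =>
    mem_filter.mpr ⟨mem_univ _,
      ((hnn j).lt_of_ne' hj.2).trans_le (hmono (mem_Iio.mp hi |>.le.trans hj.1)) |>.ne'⟩
  have hdisj : Disjoint (Iio a) {i ∈ Ici a | lam i ≠ 0} :=
    disjoint_left.mpr fun i hi hi' => (mem_Iio.mp hi).not_ge (mem_Ici.mp (mem_filter.mp hi').1)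
  have := card_le_card (union_subset hIio (filter_subset_filter _ (subset_univ (Ici a))))
  rw [card_union_of_disjoint hdisj, Fin.card_Iio] at this
  omega

theorem sum_Ici_le (hmono : Antitone lam) (hnn : ∀ i, 0 ≤ lam i) (a : Fin m) :
    ∑ i ∈ Ici a, lam i ≤ (#{i | lam i ≠ 0} - a : ℕ) * lam a := by
  calc ∑ i ∈ Ici a, lam i = ∑ i ∈ Ici a with lam i ≠ 0, lam i := by
        rw [sum_filter_ne_zero]
    _ ≤ #{i ∈ Ici a | lam i ≠ 0} • lam a :=
        sum_le_card_nsmul _ _ _ fun i hi => hmono (mem_Ici.mp (mem_filter.mp hi).1)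
    _ ≤ (#{i | lam i ≠ 0} - a : ℕ) * lam a := by
        rw [nsmul_eq_mul]
        gcongr
        · exact hnn a
        · exact card_filter_Ici_ne_zero_le hmono hnn a

theorem sum_powersetCard_succ_prod_le (hmono : Antitone lam) (hnn : ∀ i, 0 ≤ lam i) {k : ℕ}
    (hkm : k < m) :
    ∑ T ∈ powersetCard (k + 1) univ, ∏ i ∈ T, lam i
      ≤ (#{i | lam i ≠ 0} - k : ℕ) * lam ⟨k, hkm⟩ * ∑ S ∈ powersetCard k univ, ∏ i ∈ S, lam i := by
  set a : Fin m := ⟨k, hkm⟩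
  have hprod : ∀ S : Finset (Fin m), 0 ≤ ∏ i ∈ S, lam i := fun S => prod_nonneg fun i _ => hnn i
  -- a `(k + 1)`-set has an element `≥ k`, so weighting `∏ T` by the number of them increases it
  have hsplit : ∀ T ∈ powersetCard (k + 1) univ,
      ∏ i ∈ T, lam i ≤ ∑ i ∈ T, if a ≤ i then ∏ j ∈ T, lam j else 0 := by
    intro T hT
    obtain ⟨i, hiT, hi⟩ : ∃ i ∈ T, a ≤ i := by
      by_contra! h
      have := card_le_card fun i hi => mem_Iio.mpr (h i hi)
      rw [Fin.card_Iio, (mem_powersetCard.mp hT).2] at this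
      exact (Nat.lt_succ_self k).not_ge this
    refine le_of_eq_of_le (if_pos hi).symm
      (single_le_sum (f := fun i => if a ≤ i then ∏ j ∈ T, lam j else 0) (fun j _ => ?_) hiT)
    split_ifs <;> simp [hprod]
  calc ∑ T ∈ powersetCard (k + 1) univ, ∏ i ∈ T, lam i
      ≤ ∑ T ∈ powersetCard (k + 1) univ, ∑ i ∈ T, if a ≤ i then ∏ j ∈ T, lam j else 0 :=
        sum_le_sum hsplit
    _ = ∑ S ∈ powersetCard k univ, ∑ i ∈ univ \ S, if a ≤ i then ∏ j ∈ insert i S, lam j else 0 :=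
        (sum_powersetCard_sum_sdiff_insert _ _ _).symm
    _ ≤ ∑ S ∈ powersetCard k univ, (∏ j ∈ S, lam j) * ∑ i ∈ Ici a, lam i := by
        refine sum_le_sum fun S _ => ?_
        rw [← sum_filter, mul_sum]
        calc ∑ i ∈ univ \ S with a ≤ i, ∏ j ∈ insert i S, lam j
            = ∑ i ∈ univ \ S with a ≤ i, (∏ j ∈ S, lam j) * lam i :=
              sum_congr rfl fun i hi => by
                rw [prod_insert (mem_sdiff.mp (mem_filter.mp hi).1).2, mul_comm]
          _ ≤ ∑ i ∈ Ici a, (∏ j ∈ S, lam j) * lam i :=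
              sum_le_sum_of_subset_of_nonneg (fun i hi => by simpa using (mem_filter.mp hi).2)
                fun i _ _ => mul_nonneg (hprod S) (hnn i)
    _ ≤ ∑ S ∈ powersetCard k univ, (∏ j ∈ S, lam j) * ((#{i | lam i ≠ 0} - k : ℕ) * lam a) :=
        sum_le_sum fun S _ => mul_le_mul_of_nonneg_left (sum_Ici_le hmono hnn a) (hprod S)
    _ = _ := by rw [mul_sum]; exact sum_congr rfl fun S _ => mul_comm _ _

end Antitone

theorem Matrix.sum_det_submatrix_eq_sum_prod_of_charpoly_eq {ι R : Type*} [Fintype ι]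
    [DecidableEq ι] [CommRing R] (B : Matrix ι ι R) (lam : ι → R)
    (hB : B.charpoly = ∏ i, (Polynomial.X - Polynomial.C (lam i))) {j : ℕ}
    (hj : j ≤ Fintype.card ι) :
    ∑ s ∈ powersetCard j univ, (B.submatrix (Subtype.val : s → ι) Subtype.val).det
      = ∑ s ∈ powersetCard j univ, ∏ i ∈ s, lam i := by
  have hcard : Multiset.card (univ.val.map lam) = Fintype.card ι := by simp
  have hvieta : (∏ i, (Polynomial.X - Polynomial.C (lam i))).coeff (Fintype.card ι - j)
      = (-1) ^ j * ∑ s ∈ powersetCard j univ, ∏ i ∈ s, lam i := by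
    have := (univ.val.map lam).prod_X_sub_C_coeff (k := Fintype.card ι - j) (by omega)
    rwa [Multiset.map_map, hcard, Nat.sub_sub_self hj, Finset.esymm_map_val] at this
  have hminors := B.charpoly_coeff_eq_sum_minors j hj
  rw [hB, hvieta] at hminors
  have hsign : ((-1 : R) ^ j) * (-1) ^ j = 1 := by rw [← mul_pow]; simp
  rw [← one_mul (∑ s ∈ _, ∏ i ∈ s, lam i), ← hsign, mul_assoc, hminors, ← mul_assoc, hsign,
    one_mul]

theorem Matrix.det_gram_sum_elim {E ι : Type*} [NormedAddCommGroup E] [InnerProductSpace ℝ E]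
    [Fintype ι] [DecidableEq ι] (v : ι → E) [(span ℝ (Set.range v)).HasOrthogonalProjection]
    (w : E) :
    (gram ℝ (Sum.elim v fun _ : Unit => w)).det
      = (gram ℝ v).det * ‖w - (span ℝ (Set.range v)).starProjection w‖ ^ 2 := by
  set W := span ℝ (Set.range v)
  set r := w - W.starProjection w
  have hrW : ∀ u ∈ W, ⟪r, u⟫_ℝ = 0 := W.starProjection_inner_eq_zero w
  obtain ⟨c, hc⟩ := (mem_span_range_iff_exists_fun ℝ).mp (W.starProjection_apply_mem w)
  have hw : w = r + ∑ i, c i • v i := by rw [hc, sub_add_cancel]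
  set V := Sum.elim v fun _ : Unit => w
  set N := gram ℝ V
  -- as `w = r + ∑ c i • v i`, the last row is `⟪r, V ·⟫` plus a combination of the other rows,
  -- and `⟪r, V ·⟫` vanishes except at the last entry since `r ⟂ W`
  have hrow : N (.inr ()) = (fun b => ⟪r, V b⟫_ℝ) + ∑ x, Sum.elim c 0 x • N x := by
    ext b
    simp only [Pi.add_apply, Finset.sum_apply, Pi.smul_apply, Fintype.sum_sum_type,
      Sum.elim_inl, Sum.elim_inr, Pi.zero_apply, zero_smul, Finset.sum_const_zero, add_zero,
      smul_eq_mul, N, gram_apply]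
    change ⟪w, V b⟫_ℝ = _
    rw [hw, inner_add_left, sum_inner]
    simp only [real_inner_smul_left, V, Sum.elim_inl]
  have hblocks : N.updateRow (.inr ()) (fun b => ⟪r, V b⟫_ℝ)
      = fromBlocks (gram ℝ v) (of fun a _ => ⟪v a, w⟫_ℝ) 0 (of fun _ _ => ‖r‖ ^ 2) := by
    ext (a | u) (b | u')
    · rfl
    · rfl
    · exact hrW _ (subset_span ⟨b, rfl⟩)
    · simp only [updateRow_self, fromBlocks_apply₂₂, of_apply, V, Sum.elim_inr]
      rw [← sub_add_cancel w (W.starProjection w), inner_add_right,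
        hrW _ (W.starProjection_apply_mem w), add_zero, real_inner_self_eq_norm_sq]
  calc N.det = (N.updateRow (.inr ()) (N (.inr ()))).det := by rw [updateRow_eq_self]
    _ = (N.updateRow (.inr ()) (fun b => ⟪r, V b⟫_ℝ)).det := by
      rw [hrow, det_updateRow_add, det_updateRow_sum]
      simp
    _ = (gram ℝ v).det * ‖r‖ ^ 2 := by
      rw [hblocks, det_fromBlocks_zero₂₁, det_unique (of _ : Matrix Unit Unit ℝ)]
      rfl

section Rows

variable {m n : ℕ} (A : Matrix (Fin m) (Fin n) ℝ)

noncomputable def rowVec (i : Fin m) : EuclideanSpace ℝ (Fin n) :=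
  (WithLp.equiv 2 (Fin n → ℝ)).symm (A i)

noncomputable def rowSpan (S : Finset (Fin m)) : Submodule ℝ (EuclideanSpace ℝ (Fin n)) :=
  span ℝ (Set.range fun s : S => rowVec A s)

theorem projSpan_apply (S : Finset (Fin m)) (i : Fin m) (j : Fin n) :
    projSpan A S i j = (rowSpan A S).starProjection (rowVec A i) j := rfl

theorem gramDet_eq_det_gram (S : Finset (Fin m)) :
    gramDet A S = (gram ℝ fun s : S => rowVec A s).det := by
  have : rowSub A S * (rowSub A S)ᵀ = gram ℝ fun s : S => rowVec A s := by
    ext a b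
    simp [rowSub, mul_apply, rowVec, gram_apply, PiLp.inner_apply, mul_comm]
  rw [gramDet, this]

theorem gramDet_nonneg (S : Finset (Fin m)) : 0 ≤ gramDet A S := by
  rw [gramDet_eq_det_gram]
  exact (posSemidef_gram ℝ _).det_nonneg

theorem gramDet_insert {S : Finset (Fin m)} {i : Fin m} (hi : i ∉ S) :
    gramDet A (insert i S)
      = gramDet A S * ‖rowVec A i - (rowSpan A S).starProjection (rowVec A i)‖ ^ 2 := by
  let e := (subtypeInsertEquivOption hi).trans (Equiv.optionEquivSumPUnit _)
  have hrows : (fun s : (insert i S : Finset _) => rowVec A s)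
      = Sum.elim (fun s : S => rowVec A s) (fun _ : Unit => rowVec A i) ∘ e := by
    ext1 ⟨x, hx⟩
    by_cases h : x = i
    · subst h; simp [e, subtypeInsertEquivOption]
    · simp [e, subtypeInsertEquivOption, h]
  rw [gramDet_eq_det_gram, gramDet_eq_det_gram, hrows]
  change ((gram ℝ (Sum.elim (fun s : S => rowVec A s) fun _ : Unit => rowVec A i)).submatrix
    e e).det = _
  rw [det_submatrix_equiv_self]
  exact det_gram_sum_elim _ _

theorem frobSq_sub_projSpan (S : Finset (Fin m)) :
    frobSq (A - projSpan A S)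
      = ∑ i, ‖rowVec A i - (rowSpan A S).starProjection (rowVec A i)‖ ^ 2 := by
  refine sum_congr rfl fun i _ => ?_
  rw [EuclideanSpace.norm_sq_eq]
  simp [projSpan_apply, rowVec]

theorem starProjection_rowVec_of_mem {S : Finset (Fin m)} {i : Fin m} (hi : i ∈ S) :
    (rowSpan A S).starProjection (rowVec A i) = rowVec A i :=
  starProjection_eq_self_iff.mpr (subset_span ⟨⟨i, hi⟩, rfl⟩)

theorem gramDet_mul_frobSq_sub_projSpan (S : Finset (Fin m)) :
    gramDet A S * frobSq (A - projSpan A S) = ∑ i ∈ univ \ S, gramDet A (insert i S) := by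
  rw [frobSq_sub_projSpan, mul_sum, ← sum_sdiff (subset_univ S), sum_eq_zero (s := S), add_zero]
  · exact sum_congr rfl fun i hi => (gramDet_insert A (mem_sdiff.mp hi).2).symm
  · intro i hi
    rw [starProjection_rowVec_of_mem A hi, sub_self, norm_zero]
    ring

theorem sum_gramDet_mul_frobSq_sub_projSpan (k : ℕ) :
    ∑ S ∈ powersetCard k univ, gramDet A S * frobSq (A - projSpan A S)
      = (k + 1) * ∑ T ∈ powersetCard (k + 1) univ, gramDet A T := by
  simp_rw [gramDet_mul_frobSq_sub_projSpan]
  exact sum_powersetCard_sum_sdiff_insert_eq_mul _ _ _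

theorem frobSq_nonneg (M : Matrix (Fin m) (Fin n) ℝ) : 0 ≤ frobSq M := by
  unfold frobSq; positivity

theorem specNorm_sq_le_frobSq (M : Matrix (Fin m) (Fin n) ℝ) : specNorm M ^ 2 ≤ frobSq M := by
  have hF := frobSq_nonneg M
  suffices specNorm M ≤ √(frobSq M) from
    (pow_le_pow_left₀ (norm_nonneg _) this 2).trans (Real.sq_sqrt hF).le
  refine ContinuousLinearMap.opNorm_le_bound _ (Real.sqrt_nonneg _) fun x => ?_
  rw [← Real.sqrt_sq (norm_nonneg x), ← Real.sqrt_mul hF]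
  refine Real.le_sqrt_of_sq_le ?_
  rw [LinearMap.coe_toContinuousLinearMap', EuclideanSpace.norm_sq_eq, EuclideanSpace.norm_sq_eq,
    frobSq, sum_mul]
  refine sum_le_sum fun i _ => ?_
  simpa [mulVec, dotProduct] using
    sum_mul_sq_le_sq_mul_sq univ (M i) fun j => x j

theorem gramDet_eq_det_submatrix (S : Finset (Fin m)) :
    gramDet A S = ((A * Aᵀ).submatrix (Subtype.val : S → Fin m) Subtype.val).det :=
  rfl

theorem card_le_rank_of_gramDet_ne_zero {S : Finset (Fin m)} (h : gramDet A S ≠ 0) :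
    #S ≤ A.rank := by
  have hunit : IsUnit (rowSub A S * (rowSub A S)ᵀ) :=
    (isUnit_iff_isUnit_det _).mpr (isUnit_iff_ne_zero.mpr h)
  calc #S = (rowSub A S * (rowSub A S)ᵀ).rank := by rw [rank_of_isUnit _ hunit, Fintype.card_coe]
    _ ≤ (rowSub A S).rank := rank_mul_le_left _ _
    _ ≤ A.rank := rank_submatrix_le A Subtype.val id

theorem sum_gramDet_eq_sum_prod {lam : Fin m → ℝ}
    (hlam : (A * Aᵀ).charpoly = ∏ i, (Polynomial.X - Polynomial.C (lam i)))
    {j : ℕ} (hj : j ≤ m) :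
    ∑ S ∈ powersetCard j univ, gramDet A S = ∑ T ∈ powersetCard j univ, ∏ i ∈ T, lam i := by
  simp_rw [gramDet_eq_det_submatrix]
  exact (A * Aᵀ).sum_det_submatrix_eq_sum_prod_of_charpoly_eq lam hlam (by simpa using hj)

theorem card_ne_zero_le_rank {lam : Fin m → ℝ}
    (hlam : (A * Aᵀ).charpoly = ∏ i, (Polynomial.X - Polynomial.C (lam i)))
    (hnn : ∀ i, 0 ≤ lam i) : #{i | lam i ≠ 0} ≤ A.rank := by
  set F : Finset (Fin m) := {i | lam i ≠ 0}
  have hpos : 0 < ∑ T ∈ powersetCard #F univ, ∏ i ∈ T, lam i :=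
    (prod_pos fun i hi => (hnn i).lt_of_ne' (mem_filter.mp hi).2).trans_le
      (single_le_sum (f := fun T => ∏ i ∈ T, lam i) (fun T _ => prod_nonneg fun i _ => hnn i)
        (mem_powersetCard.mpr ⟨subset_univ F, rfl⟩))
  rw [← sum_gramDet_eq_sum_prod A hlam (card_le_univ F |>.trans_eq (Fintype.card_fin m))] at hpos
  obtain ⟨S, hS, hne⟩ := exists_ne_zero_of_sum_ne_zero hpos.ne'
  exact (mem_powersetCard.mp hS).2 ▸ card_le_rank_of_gramDet_ne_zero A hne

theorem sum_gramDet_succ_le {lam : Fin m → ℝ}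
    (hlam : (A * Aᵀ).charpoly = ∏ i, (Polynomial.X - Polynomial.C (lam i)))
    (hmono : Antitone lam) (hnn : ∀ i, 0 ≤ lam i) {k : ℕ} (hk : k ≤ A.rank) (hkm : k < m) :
    ∑ T ∈ powersetCard (k + 1) univ, gramDet A T
      ≤ (n - k) * lam ⟨k, hkm⟩ * ∑ S ∈ powersetCard k univ, gramDet A S := by
  have hcard : ((#{i | lam i ≠ 0} - k : ℕ) : ℝ) ≤ n - k := by
    rw [← Nat.cast_sub (hk.trans (rank_le_width A))]
    exact_mod_cast Nat.sub_le_sub_right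
      ((card_ne_zero_le_rank A hlam hnn).trans (rank_le_width A)) k
  rw [sum_gramDet_eq_sum_prod A hlam hkm, sum_gramDet_eq_sum_prod A hlam hkm.le]
  refine (hmono.sum_powersetCard_succ_prod_le hnn hkm).trans ?_
  gcongr
  exacts [sum_nonneg fun S _ => prod_nonneg fun i _ => hnn i, hnn _]

theorem sq_sum_gramDet_mul_specNorm_le (k : ℕ) :
    (∑ S ∈ powersetCard k univ, gramDet A S * specNorm (A - projSpan A S)) ^ 2
      ≤ (∑ S ∈ powersetCard k univ, gramDet A S)
        * ((k + 1) * ∑ T ∈ powersetCard (k + 1) univ, gramDet A T) := by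
  rw [← sum_gramDet_mul_frobSq_sub_projSpan]
  refine sum_sq_le_sum_mul_sum_of_sq_le_mul _ (fun S _ => gramDet_nonneg A S)
    (fun S _ => mul_nonneg (gramDet_nonneg A S) (frobSq_nonneg _)) fun S _ => ?_
  have hS := gramDet_nonneg A S
  rw [mul_pow, sq, mul_assoc]
  gcongr
  exact specNorm_sq_le_frobSq _

end Rows

theorem sum_det_spectral_le_general {m n : ℕ} (A : Matrix (Fin m) (Fin n) ℝ) (k : ℕ)
    (hk2 : k ≤ A.rank) (hkm : k < m) (lam : Fin m → ℝ) (hmono : Antitone lam)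
    (hnn : ∀ i, 0 ≤ lam i)
    (hlam : (A * Aᵀ).charpoly = ∏ i, (Polynomial.X - Polynomial.C (lam i))) :
    ∑ S ∈ Finset.powersetCard k (Finset.univ : Finset (Fin m)),
        gramDet A S * specNorm (A - projSpan A S)
      ≤ Real.sqrt (((k : ℝ) + 1) * ((n : ℝ) - (k : ℝ)) * lam ⟨k, hkm⟩) *
          ∑ S ∈ Finset.powersetCard k (Finset.univ : Finset (Fin m)), gramDet A S := by
  set E := ∑ S ∈ powersetCard k univ, gramDet A S
  have hE : 0 ≤ E := sum_nonneg fun S _ => gramDet_nonneg A S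
  rw [← Real.sqrt_sq hE, ← Real.sqrt_mul' _ (sq_nonneg E)]
  refine Real.le_sqrt_of_sq_le ((sq_sum_gramDet_mul_specNorm_le A k).trans ?_)
  calc E * ((k + 1) * ∑ T ∈ powersetCard (k + 1) univ, gramDet A T)
      ≤ E * ((k + 1) * ((n - k) * lam ⟨k, hkm⟩ * E)) := by
        gcongr
        exact sum_gramDet_succ_le A hlam hmono hnn hk2 hkm
    _ = (k + 1) * (n - k) * lam ⟨k, hkm⟩ * E ^ 2 := by ring

/-- ∑_{|S|=k} det(A_S A_Sᵀ)·‖A − π_S(A)‖₂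
  ≤ √((k+1)(n−k)·λ_{k+1}) · ∑_{|S|=k} det(A_S A_Sᵀ), where λ_1 ≥ … ≥ λ_m ≥ 0 are the
eigenvalues of A Aᵀ. -/
theorem sum_det_spectral_le {m n : ℕ} (A : Matrix (Fin m) (Fin n) ℝ) (k : ℕ)
    (hk1 : 1 ≤ k) (hk2 : k ≤ A.rank) (hkm : k < m) (lam : Fin m → ℝ) (hmono : Antitone lam)
    (hnn : ∀ i, 0 ≤ lam i)
    (hlam : (A * Aᵀ).charpoly = ∏ i, (Polynomial.X - Polynomial.C (lam i))) :
    ∑ S ∈ Finset.powersetCard k (Finset.univ : Finset (Fin m)),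
        gramDet A S * specNorm (A - projSpan A S)
      ≤ Real.sqrt (((k : ℝ) + 1) * ((n : ℝ) - (k : ℝ)) * lam ⟨k, hkm⟩) *
          ∑ S ∈ Finset.powersetCard k (Finset.univ : Finset (Fin m)), gramDet A S :=
  sum_det_spectral_le_general A k hk2 hkm lam hmono hnn hlam
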